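/- (Prefix invariance in the termination proof of Appendix Lemma C.1.) Let B ∈ (ℤ₂)^{m×n} and let Φ be the parallel reduction step map. If for some 1 ≤ l ≤ n the submatrix B[≤ l] consisting of the first l columns of B is reduced, then Φ(B)[≤ l] = B[≤ l]; consequently the first l columns remain unchanged and reduced under all further iterations of Φ. -/
import Mathlib


open Classical

variable {m n : ℕ}

/-- `lowOf B i` is the largest row index `j` with `B j i = 1` (as an integer),
or `-1` if the `i`-th column of `B` is zero. -/
noncomputable def lowOf (B : Matrix (Fin m) (Fin n) (ZMod 2)) (i : Fin n) : ℤ :=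
  if h : (Finset.univ.filter fun j : Fin m => B j i ≠ 0).Nonempty
  then (((Finset.univ.filter fun j : Fin m => B j i ≠ 0).max' h : Fin m) : ℤ)
  else -1

/-- `Ifun B j = {i : low(B, i) = j}` if this set has at least two elements,
and `∅` otherwise. -/
noncomputable def Ifun (B : Matrix (Fin m) (Fin n) (ZMod 2)) (j : Fin m) :
    Finset (Fin n) :=
  if 2 ≤ (Finset.univ.filter fun i : Fin n => lowOf B i = (j : ℤ)).card
  then Finset.univ.filter fun i : Fin n => lowOf B i = (j : ℤ)
  else ∅

/-- `Mset B = ⋃_j M(B, j)` where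
`M(B, j) = {min I(B, j)} × (I(B, j) \ {min I(B, j)})` if `I(B, j) ≠ ∅`,
and `M(B, j) = ∅` otherwise. -/
noncomputable def Mset (B : Matrix (Fin m) (Fin n) (ZMod 2)) :
    Finset (Fin n × Fin n) :=
  Finset.univ.biUnion fun j : Fin m =>
    if h : (Ifun B j).Nonempty
    then ({(Ifun B j).min' h} : Finset (Fin n)) ×ˢ
      ((Ifun B j).erase ((Ifun B j).min' h))
    else ∅

/-- The parallel reduction step map `Φ`: the `j`-th column of `Φ(B)` is
`B[j] + B[i]` if `(i, j) ∈ M(B)`, and `B[j]` otherwise. (This is well defined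
since for each `j` there is at most one `i` with `(i, j) ∈ M(B)`.) -/
noncomputable def step (B : Matrix (Fin m) (Fin n) (ZMod 2)) :
    Matrix (Fin m) (Fin n) (ZMod 2) :=
  fun r j =>
    if h : ∃ i : Fin n, (i, j) ∈ Mset B
    then B r j + B r (Classical.choose h)
    else B r j

/-- The submatrix of the first `l` columns of `B` is reduced: for all column
indices `i < j` below `l` with both columns nonzero, `low(B, i) ≠ low(B, j)`. -/
def PrefixReduced (B : Matrix (Fin m) (Fin n) (ZMod 2)) (l : ℕ) : Prop :=
  ∀ i j : Fin n, (i : ℕ) < l → (j : ℕ) < l → i < j →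
    (∃ r, B r i ≠ 0) → (∃ r, B r j ≠ 0) → lowOf B i ≠ lowOf B j

lemma mem_Ifun_low {C : Matrix (Fin m) (Fin n) (ZMod 2)} {jr : Fin m} {x : Fin n}
    (hx : x ∈ Ifun C jr) : lowOf C x = (jr : ℤ) := by
  unfold Ifun at hx
  split at hx
  · exact (Finset.mem_filter.1 hx).2
  · simp at hx

lemma col_nonzero_of_low {C : Matrix (Fin m) (Fin n) (ZMod 2)} {x : Fin n} {jr : Fin m}
    (h : lowOf C x = (jr : ℤ)) : ∃ r, C r x ≠ 0 := by
  by_contra hc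
  push_neg at hc
  unfold lowOf at h
  split at h
  · rename_i hpos
    obtain ⟨r, hr⟩ := hpos
    exact (Finset.mem_filter.1 hr).2 (hc r)
  · have h0 : (0 : ℤ) ≤ (jr : ℤ) := Int.ofNat_nonneg _
    omega

lemma not_mem_Mset {C : Matrix (Fin m) (Fin n) (ZMod 2)} {l : ℕ}
    (hred : PrefixReduced C l) {i j : Fin n} (hj : (j : ℕ) < l) :
    (i, j) ∉ Mset C := by
  intro hmem
  rw [Mset, Finset.mem_biUnion] at hmem
  obtain ⟨jr, -, hm⟩ := hmem
  split at hm
  · rename_i hne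
    rw [Finset.mem_product] at hm
    obtain ⟨hi, hje⟩ := hm
    rw [Finset.mem_singleton] at hi
    have hi' : i = (Ifun C jr).min' hne := hi
    have hje' : j ∈ (Ifun C jr).erase ((Ifun C jr).min' hne) := hje
    have hjI : j ∈ Ifun C jr := Finset.mem_of_mem_erase hje'
    have hjne : j ≠ (Ifun C jr).min' hne := Finset.ne_of_mem_erase hje'
    have hij : i ≤ j := hi' ▸ Finset.min'_le _ _ hjI
    have hij' : i < j := lt_of_le_of_ne hij (by rw [hi']; exact fun h => hjne h.symm)
    have hlowi : lowOf C i = (jr : ℤ) := mem_Ifun_low (hi' ▸ Finset.min'_mem _ hne)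
    have hlowj : lowOf C j = (jr : ℤ) := mem_Ifun_low hjI
    have hil : (i : ℕ) < l := lt_of_lt_of_le (Fin.lt_iff_val_lt_val.1 hij') hj.le
    exact hred i j hil hj hij'
      (col_nonzero_of_low hlowi) (col_nonzero_of_low hlowj) (hlowi.trans hlowj.symm)
  · simp at hm

lemma step_fix {C : Matrix (Fin m) (Fin n) (ZMod 2)} {l : ℕ}
    (hred : PrefixReduced C l) (r : Fin m) (j : Fin n) (hj : (j : ℕ) < l) :
    step C r j = C r j := by
  unfold step
  rw [dif_neg]
  rintro ⟨i, hi⟩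
  exact not_mem_Mset hred hj hi

lemma lowOf_congr {C D : Matrix (Fin m) (Fin n) (ZMod 2)} {j : Fin n}
    (h : ∀ r, C r j = D r j) : lowOf C j = lowOf D j := by
  unfold lowOf
  have : (Finset.univ.filter fun r : Fin m => C r j ≠ 0) =
      (Finset.univ.filter fun r : Fin m => D r j ≠ 0) := by
    apply Finset.filter_congr; intro r _; rw [h r]
  simp only [this]

lemma prefixReduced_congr {C D : Matrix (Fin m) (Fin n) (ZMod 2)} {l : ℕ}
    (h : ∀ (r : Fin m) (j : Fin n), (j : ℕ) < l → C r j = D r j)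
    (hred : PrefixReduced D l) : PrefixReduced C l := by
  intro i j hi hj hij hci hcj
  have hei : lowOf C i = lowOf D i := lowOf_congr fun r => h r i hi
  have hej : lowOf C j = lowOf D j := lowOf_congr fun r => h r j hj
  rw [hei, hej]
  refine hred i j hi hj hij ?_ ?_
  · obtain ⟨r, hr⟩ := hci; exact ⟨r, by rw [← h r i hi]; exact hr⟩
  · obtain ⟨r, hr⟩ := hcj; exact ⟨r, by rw [← h r j hj]; exact hr⟩

/-- Prefix invariance in the termination proof of Appendix Lemma
C.1: if the submatrix of the first `l` columns of `B` is reduced, then `Φ(B)`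
agrees with `B` on the first `l` columns; consequently the first `l` columns
remain unchanged (and hence reduced) under all further iterations of `Φ`. -/
theorem prefix_invariance (B : Matrix (Fin m) (Fin n) (ZMod 2)) (l : ℕ)
    (hl : 1 ≤ l) (hln : l ≤ n) (hred : PrefixReduced B l) :
    (∀ (r : Fin m) (j : Fin n), (j : ℕ) < l → step B r j = B r j) ∧
    (∀ (k : ℕ) (r : Fin m) (j : Fin n), (j : ℕ) < l →
      (step^[k] B) r j = B r j) ∧
    (∀ k : ℕ, PrefixReduced (step^[k] B) l) := by
  have hiter : ∀ (k : ℕ) (r : Fin m) (j : Fin n), (j : ℕ) < l →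
      (step^[k] B) r j = B r j := by
    intro k
    induction k with
    | zero => intro r j _; rfl
    | succ k ih =>
      intro r j hj
      rw [Function.iterate_succ_apply',
        step_fix (prefixReduced_congr ih hred) r j hj]
      exact ih r j hj
  exact ⟨fun r j hj => step_fix hred r j hj, hiter,
    fun k => prefixReduced_congr (hiter k) hred⟩
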